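/- Let C be an associative cone in ℝ⁷ with link Σ ⊂ S⁶ and let 𝐃_C be the Fueter operator on NC and 𝐃_Σ the Dirac operator on NΣ. Then for every ν_Σ ∈ C^∞(N_{S⁶}Σ), every λ ∈ ℝ and every j ∈ ℕ₀: (a) 𝐃_C = J∂_r + (1/r)𝐃_Σ + (2/r)J; (b) 𝐃_C(r^{λ−1} ν_Σ) = r^{λ−2}(𝐃_Σ ν_Σ + (λ+1)Jν_Σ); (c) 𝐃_C(r^{λ−1}(log r)^j ν_Σ) = r^{λ−2}(log r)^j(𝐃_Σ ν_Σ + (λ+1)Jν_Σ) + j r^{λ−2}(log r)^{j−1} Jν_Σ. -/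

import Mathlib

open scoped RealInnerProductSpace

noncomputable section

/-- ℝ⁷ with its Euclidean inner product. -/
abbrev E7 : Type := EuclideanSpace ℝ (Fin 7)

/-- (e^i ∧ e^j ∧ e^k)(x, y, z). -/
def tripleDet (i j k : Fin 7) (x y z : E7) : ℝ :=
  Matrix.det !![x i, y i, z i; x j, y j, z j; x k, y k, z k]

/-- The standard G₂ 3-form
φₑ = e^{123} − e^{145} − e^{167} − e^{246} − e^{275} − e^{347} − e^{356}
(indices shifted to start from 0). -/
def phiE (x y z : E7) : ℝ :=
  tripleDet 0 1 2 x y z - tripleDet 0 3 4 x y z - tripleDet 0 5 6 x y z -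
    tripleDet 1 3 5 x y z - tripleDet 1 6 4 x y z - tripleDet 2 3 6 x y z -
    tripleDet 2 4 5 x y z

/-- The octonionic cross product on ℝ⁷ = Im 𝕆, characterized by ⟨u × v, w⟩ = φₑ(u,v,w). -/
def cross7 (u v : E7) : E7 :=
  (EuclideanSpace.equiv (Fin 7) ℝ).symm fun k => phiE u v (EuclideanSpace.single k 1)

/-- Tangential projection onto T_x S⁶ (for ‖x‖ = 1): w ↦ w − ⟨x,w⟩x. -/
def tproj (x w : E7) : E7 := w - ⟪x, w⟫ • x

/-- Chart domain for a local parametrization of a surface Σ ⊂ S⁶. -/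
abbrev Pt : Type := ℝ × ℝ

/-- The standard complex structure j₀ of the chart ℝ². -/
def j0 (c : Pt) : Pt := (-c.2, c.1)

/-- The span of the position vector and the tangent plane of the parametrized surface
F : ℝ² → Σ ⊂ S⁶ at F(p). -/
def TanSpan (F : Pt → E7) (p : Pt) : Submodule ℝ E7 :=
  Submodule.span ℝ {F p, fderiv ℝ F p (1, 0), fderiv ℝ F p (0, 1)}

/-- The normal space N_{F(p)}Σ of Σ in S⁶. -/
def Nsp (F : Pt → E7) (p : Pt) : Submodule ℝ E7 := (TanSpan F p)ᗮ

/-- Orthogonal projection onto the normal space of Σ in S⁶. -/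
def PN (F : Pt → E7) (p : Pt) (w : E7) : E7 := ((Nsp F p).orthogonalProjection w : E7)

/-- The normal connection ∇^⊥ (induced by the Levi–Civita connection of the round S⁶) on normal
vector fields ξ along Σ, in the chart direction c. -/
def covN (F ξ : Pt → E7) (p : Pt) (c : Pt) : E7 := PN F p (fderiv ℝ ξ p c)

/-- The normal part ∇̃^⊥ of the characteristic SU(3) connection
∇̃_u ξ = ∇_u ξ + ½ (∇_u J)(Jξ), in the chart direction c;
here (∇_u J)v = u ×_{S⁶} v on S⁶. -/
def covT (F ξ : Pt → E7) (p : Pt) (c : Pt) : E7 :=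
  PN F p (fderiv ℝ ξ p c + (2 : ℝ)⁻¹ • cross7 (fderiv ℝ F p c) (cross7 (F p) (ξ p)))

/-- The Dirac operator 𝐃_Σ = Σᵢ fᵢ × ∇̃^⊥_{fᵢ} of the link, in a conformal chart
(fᵢ = ∂ᵢF/ρ with ρ = ‖∂₁F‖ = ‖∂₂F‖). -/
def DSigC (F ξ : Pt → E7) (p : Pt) : E7 :=
  (‖fderiv ℝ F p (1, 0)‖ ^ 2)⁻¹ •
    (cross7 (fderiv ℝ F p (1, 0)) (covT F ξ p (1, 0)) +
      cross7 (fderiv ℝ F p (0, 1)) (covT F ξ p (0, 1)))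

/-- The Fueter operator 𝐃_C = Σₐ eₐ × ∇^⊥_{C,eₐ} of the cone C over Σ, acting on Euclidean
normal vector fields w(r,p) along the cone, written in the oriented orthonormal frame
{∂_r = F(p), f₁, f₂}. -/
def DconeE (F : Pt → E7) (w : ℝ → Pt → E7) (r : ℝ) (p : Pt) : E7 :=
  cross7 (F p) (PN F p (deriv (fun s => w s p) r)) +
    (r * ‖fderiv ℝ F p (1, 0)‖ ^ 2)⁻¹ •
      (cross7 (fderiv ℝ F p (1, 0)) (PN F p (fderiv ℝ (w r) p (1, 0))) +
        cross7 (fderiv ℝ F p (0, 1)) (PN F p (fderiv ℝ (w r) p (0, 1))))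

/-- The Fueter operator 𝐃_C on sections u of NC ≅ π*NΣ, under the canonical identification of
sections of π*NΣ with Euclidean normal fields (|r^{λ−1}ν|_{g_{NC}} = r^λ |ν|, i.e. u ↦ r·u). -/
def Dcone (F : Pt → E7) (u : ℝ → Pt → E7) (r : ℝ) (p : Pt) : E7 :=
  r⁻¹ • DconeE F (fun s q => s • u s q) r p


/-!
Along the cone `∂_r = F(p)` and `∇^⊥_C = dr ⊗ ∂_r + π*∇^⊥_Σ`, so `𝐃_C` is `J ∂_r` plus `1/r` times
the link operator `Σ fᵢ × ∇^⊥_{fᵢ}` built from the Levi-Civita normal connection. The tangent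
3-plane `⟨F, ∂₁F, ∂₂F⟩` is associative, so crossing with it preserves the normal space; hence the
characteristic connection only adds `½ fᵢ × (fᵢ × Jν)` to `∇^⊥_{fᵢ} ν`, and since
`fᵢ × (fᵢ × Jν) = -Jν` this gives `𝐃_Σ = Σ fᵢ × ∇^⊥_{fᵢ} − J`. The identification `u ↦ r u` of
sections of `π*NΣ` contributes one more `J/r`, which proves (a); (b) and (c) follow from the
product rule in `r`, (b) being (c) with `j = 0`.
-/

theorem cross7_eq (u v : E7) : cross7 u v = !₂[
    u 1 * v 2 - u 2 * v 1 - (u 3 * v 4 - u 4 * v 3) - (u 5 * v 6 - u 6 * v 5),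
    -(u 0 * v 2 - u 2 * v 0) - (u 3 * v 5 - u 5 * v 3) + (u 4 * v 6 - u 6 * v 4),
    u 0 * v 1 - u 1 * v 0 - (u 3 * v 6 - u 6 * v 3) - (u 4 * v 5 - u 5 * v 4),
    u 0 * v 4 - u 4 * v 0 + (u 1 * v 5 - u 5 * v 1) + (u 2 * v 6 - u 6 * v 2),
    -(u 0 * v 3 - u 3 * v 0) - (u 1 * v 6 - u 6 * v 1) + (u 2 * v 5 - u 5 * v 2),
    u 0 * v 6 - u 6 * v 0 - (u 1 * v 3 - u 3 * v 1) - (u 2 * v 4 - u 4 * v 2),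
    -(u 0 * v 5 - u 5 * v 0) + (u 1 * v 4 - u 4 * v 1) - (u 2 * v 3 - u 3 * v 2)] := by
  ext k
  fin_cases k <;>
    simp only [cross7, phiE, tripleDet, PiLp.continuousLinearEquiv_symm_apply, PiLp.single_apply,
      Matrix.det_fin_three, Matrix.of_apply, Matrix.cons_val', Matrix.cons_val_fin_one,
      Matrix.cons_val, Matrix.cons_val_zero, Matrix.cons_val_one, Fin.zero_eta, Fin.mk_one,
      Fin.reduceFinMk, Fin.reduceEq, Fin.isValue, ↓reduceIte, mul_ite, ite_mul, mul_one, mul_zero,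
      one_mul, zero_mul] <;> ring

theorem inner_E7_eq_sum (u v : E7) : ⟪u, v⟫ = ∑ i, u i * v i := by
  simp only [PiLp.inner_apply, RCLike.inner_apply, Real.ringHom_apply, mul_comm]

theorem cross7_antisymm (u v : E7) : cross7 u v = -cross7 v u := by
  ext k
  fin_cases k <;>
    simp only [cross7_eq, PiLp.neg_apply, Matrix.cons_val, Matrix.cons_val_zero,
      Matrix.cons_val_one, Fin.zero_eta, Fin.mk_one, Fin.reduceFinMk, Fin.isValue] <;> ring

theorem cross7_self (u : E7) : cross7 u u = 0 := by
  ext k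
  fin_cases k <;>
    simp only [cross7_eq, PiLp.zero_apply, Matrix.cons_val, Matrix.cons_val_zero,
      Matrix.cons_val_one, Fin.zero_eta, Fin.mk_one, Fin.reduceFinMk, Fin.isValue] <;> ring

theorem cross7_add_right (u v w : E7) : cross7 u (v + w) = cross7 u v + cross7 u w := by
  ext k
  fin_cases k <;>
    simp only [cross7_eq, PiLp.add_apply, Matrix.cons_val, Matrix.cons_val_zero,
      Matrix.cons_val_one, Fin.zero_eta, Fin.mk_one, Fin.reduceFinMk, Fin.isValue] <;> ring

theorem cross7_smul_right (c : ℝ) (u v : E7) : cross7 u (c • v) = c • cross7 u v := by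
  ext k
  fin_cases k <;>
    simp only [cross7_eq, PiLp.smul_apply, smul_eq_mul, Matrix.cons_val, Matrix.cons_val_zero,
      Matrix.cons_val_one, Fin.zero_eta, Fin.mk_one, Fin.reduceFinMk, Fin.isValue] <;> ring

theorem cross7_neg_right (u v : E7) : cross7 u (-v) = -cross7 u v := by
  rw [← neg_one_smul ℝ v, cross7_smul_right, neg_one_smul]

theorem inner_cross7_cyclic (u v w : E7) : ⟪cross7 u v, w⟫ = ⟪cross7 v w, u⟫ := by
  simp only [inner_E7_eq_sum, Fin.sum_univ_seven, cross7_eq, Matrix.cons_val, Matrix.cons_val_zero,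
    Matrix.cons_val_one, Fin.isValue]
  ring

theorem cross7_cross7_self (u v : E7) :
    cross7 u (cross7 u v) = ⟪u, v⟫ • u - ⟪u, u⟫ • v := by
  rw [inner_E7_eq_sum, inner_E7_eq_sum]
  ext k
  fin_cases k <;>
    simp only [cross7_eq, Fin.sum_univ_seven, PiLp.sub_apply, PiLp.smul_apply, smul_eq_mul,
      Matrix.cons_val, Matrix.cons_val_zero,
      Matrix.cons_val_one, Fin.zero_eta, Fin.mk_one, Fin.reduceFinMk, Fin.isValue] <;> ring

theorem HasDerivAt.mem_of_forall_mem {E : Type*} [NormedAddCommGroup E] [NormedSpace ℝ E]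
    {K : Submodule ℝ E} (hK : IsClosed (K : Set E)) {g : ℝ → E} {g' : E} {r : ℝ}
    (hg : HasDerivAt g g' r) (h : ∀ s, g s ∈ K) : g' ∈ K :=
  hK.mem_of_tendsto (hasDerivAt_iff_tendsto_slope.mp hg)
    (.of_forall fun s => K.smul_mem _ (K.sub_mem (h s) (h r)))

theorem inner_cross7_eq_zero_of_mem_orthogonal {K : Submodule ℝ E7} {t t' m : E7}
    (h : cross7 t t' ∈ K) (hm : m ∈ Kᗮ) : ⟪t', cross7 t m⟫ = 0 := by
  rw [real_inner_comm, inner_cross7_cyclic, inner_cross7_cyclic, cross7_antisymm, inner_neg_left,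
    Submodule.inner_right_of_mem_orthogonal h hm, neg_zero]

section NormalSpace

variable {F : Pt → E7} {p : Pt}

theorem mem_Nsp_iff {w : E7} :
    w ∈ Nsp F p ↔
      ⟪F p, w⟫ = 0 ∧ ⟪fderiv ℝ F p (1, 0), w⟫ = 0 ∧
        ⟪fderiv ℝ F p (0, 1), w⟫ = 0 := by
  rw [Nsp, TanSpan, ← Submodule.span_singleton_le_iff_mem, ← Submodule.isOrtho_iff_le,
    Submodule.isOrtho_comm, Submodule.isOrtho_span]
  simp

theorem PN_of_mem {w : E7} (h : w ∈ Nsp F p) : PN F p w = w :=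
  (Nsp F p).starProjection_eq_self_iff.mpr h

theorem PN_add (v w : E7) : PN F p (v + w) = PN F p v + PN F p w := by
  simp [PN]

theorem PN_smul (c : ℝ) (w : E7) : PN F p (c • w) = c • PN F p w := by
  simp [PN]

theorem covT_eq_covN_add {ξ : Pt → E7} {c : Pt}
    (h : cross7 (fderiv ℝ F p c) (cross7 (F p) (ξ p)) ∈ Nsp F p) :
    covT F ξ p c =
      covN F ξ p c + (2 : ℝ)⁻¹ • cross7 (fderiv ℝ F p c) (cross7 (F p) (ξ p)) := by
  rw [covT, covN, PN_add, PN_smul, PN_of_mem h]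

theorem DSigC_const_smul {ξ : Pt → E7} (hξ : DifferentiableAt ℝ ξ p) (c : ℝ) :
    DSigC F (fun q => c • ξ q) p = c • DSigC F ξ p := by
  simp only [DSigC, covT, fderiv_fun_const_smul hξ, FunLike.coe_smul, Pi.smul_apply,
    cross7_smul_right, smul_comm (2 : ℝ)⁻¹ c, ← smul_add, PN_smul]
  rw [smul_comm]

end NormalSpace

structure IsHolomorphicFrameAt (F : Pt → E7) (p : Pt) : Prop where
  inner_self : ⟪F p, F p⟫ = 1
  inner_fderiv_fst : ⟪F p, fderiv ℝ F p (1, 0)⟫ = 0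
  fderiv_snd : fderiv ℝ F p (0, 1) = cross7 (F p) (fderiv ℝ F p (1, 0))
  fderiv_fst_ne_zero : fderiv ℝ F p (1, 0) ≠ 0

namespace IsHolomorphicFrameAt

variable {F : Pt → E7} {p : Pt}

theorem of_unit_of_holomorphic (hF : DifferentiableAt ℝ F p) (hunit : ∀ q, ‖F q‖ = 1)
    (hholo : ∀ c, fderiv ℝ F p (j0 c) = cross7 (F p) (fderiv ℝ F p c))
    (himm : fderiv ℝ F p (1, 0) ≠ 0) : IsHolomorphicFrameAt F p where
  inner_self := by rw [real_inner_self_eq_norm_sq, hunit, one_pow]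
  inner_fderiv_fst := by
    have hconst : (fun q => ⟪F q, F q⟫) = fun _ => (1 : ℝ) := by
      ext q; rw [real_inner_self_eq_norm_sq, hunit, one_pow]
    have h := fderiv_inner_apply ℝ hF hF ((1 : ℝ), (0 : ℝ))
    rw [hconst, fderiv_const_apply, real_inner_comm (F p)] at h
    simp only [FunLike.coe_zero, Pi.zero_apply] at h
    linarith
  fderiv_snd := by simpa [j0] using hholo (1, 0)
  fderiv_fst_ne_zero := himm

theorem cross_fderiv_snd (h : IsHolomorphicFrameAt F p) :
    cross7 (F p) (fderiv ℝ F p (0, 1)) = -fderiv ℝ F p (1, 0) := by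
  rw [h.fderiv_snd, cross7_cross7_self, h.inner_fderiv_fst, h.inner_self, zero_smul, one_smul,
    zero_sub]

theorem cross_fderiv_fst_fderiv_snd (h : IsHolomorphicFrameAt F p) :
    cross7 (fderiv ℝ F p (1, 0)) (fderiv ℝ F p (0, 1)) =
      ⟪fderiv ℝ F p (1, 0), fderiv ℝ F p (1, 0)⟫ • F p := by
  rw [h.fderiv_snd, cross7_antisymm (F p), cross7_neg_right, cross7_cross7_self, real_inner_comm,
    h.inner_fderiv_fst, zero_smul, zero_sub, neg_neg]

theorem inner_fderiv_snd_self (h : IsHolomorphicFrameAt F p) :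
    ⟪fderiv ℝ F p (0, 1), fderiv ℝ F p (0, 1)⟫ =
      ⟪fderiv ℝ F p (1, 0), fderiv ℝ F p (1, 0)⟫ := by
  nth_rw 1 [h.fderiv_snd]
  rw [inner_cross7_cyclic, h.cross_fderiv_fst_fderiv_snd, real_inner_smul_left, h.inner_self,
    mul_one]

theorem cross_mem_TanSpan (h : IsHolomorphicFrameAt F p) {t t' : E7}
    (ht : t ∈ ({F p, fderiv ℝ F p (1, 0), fderiv ℝ F p (0, 1)} : Set E7))
    (ht' : t' ∈ ({F p, fderiv ℝ F p (1, 0), fderiv ℝ F p (0, 1)} : Set E7)) :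
    cross7 t t' ∈ TanSpan F p := by
  have hx : F p ∈ TanSpan F p := Submodule.subset_span (by simp)
  have ha : fderiv ℝ F p (1, 0) ∈ TanSpan F p := Submodule.subset_span (by simp)
  have hb : fderiv ℝ F p (0, 1) ∈ TanSpan F p := Submodule.subset_span (by simp)
  rcases ht with rfl | rfl | rfl <;> rcases ht' with rfl | rfl | rfl <;>
    first
    | rw [cross7_self]; exact Submodule.zero_mem _
    | rw [← h.fderiv_snd]; exact hb
    | rw [h.cross_fderiv_snd]; exact Submodule.neg_mem _ ha
    | rw [h.cross_fderiv_fst_fderiv_snd]; exact Submodule.smul_mem _ _ hx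
    | rw [cross7_antisymm, ← h.fderiv_snd]; exact Submodule.neg_mem _ hb
    | rw [cross7_antisymm, h.cross_fderiv_snd, neg_neg]; exact ha
    | rw [cross7_antisymm, h.cross_fderiv_fst_fderiv_snd]
      exact Submodule.neg_mem _ (Submodule.smul_mem _ _ hx)

theorem cross_mem_Nsp (h : IsHolomorphicFrameAt F p) {t m : E7}
    (ht : t ∈ ({F p, fderiv ℝ F p (1, 0), fderiv ℝ F p (0, 1)} : Set E7))
    (hm : m ∈ Nsp F p) : cross7 t m ∈ Nsp F p := by
  refine mem_Nsp_iff.mpr ⟨?_, ?_, ?_⟩ <;>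
    exact inner_cross7_eq_zero_of_mem_orthogonal (h.cross_mem_TanSpan ht (by simp)) hm

end IsHolomorphicFrameAt

theorem DSigC_eq_covN_sub {F ξ : Pt → E7} {p : Pt} (h : IsHolomorphicFrameAt F p)
    (hξ : ξ p ∈ Nsp F p) :
    DSigC F ξ p =
      (‖fderiv ℝ F p (1, 0)‖ ^ 2)⁻¹ •
          (cross7 (fderiv ℝ F p (1, 0)) (covN F ξ p (1, 0)) +
            cross7 (fderiv ℝ F p (0, 1)) (covN F ξ p (0, 1))) -
        cross7 (F p) (ξ p) := by
  have hJξ : cross7 (F p) (ξ p) ∈ Nsp F p := h.cross_mem_Nsp (by simp) hξ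
  obtain ⟨-, ha, hb⟩ := mem_Nsp_iff.mp hJξ
  have ha0 : ‖fderiv ℝ F p (1, 0)‖ ≠ 0 := norm_ne_zero_iff.mpr h.fderiv_fst_ne_zero
  rw [DSigC, covT_eq_covN_add (h.cross_mem_Nsp (by simp) hJξ),
    covT_eq_covN_add (h.cross_mem_Nsp (by simp) hJξ)]
  simp only [cross7_add_right, cross7_smul_right, cross7_cross7_self, ha, hb,
    h.inner_fderiv_snd_self, real_inner_self_eq_norm_sq]
  match_scalars <;> field_simp <;> ring

section Cone

variable {F : Pt → E7} {p : Pt}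

theorem Dcone_eq (h : IsHolomorphicFrameAt F p) {u : ℝ → Pt → E7} {r : ℝ} (hr : r ≠ 0)
    (hu_r : DifferentiableAt ℝ (fun s => u s p) r) (hu_p : DifferentiableAt ℝ (u r) p)
    (hu : ∀ s, u s p ∈ Nsp F p) :
    Dcone F u r p =
      cross7 (F p) (deriv (fun s => u s p) r) + r⁻¹ • DSigC F (u r) p +
        (2 / r) • cross7 (F p) (u r p) := by
  have hd : HasDerivAt (fun s => s • u s p) (r • deriv (fun s => u s p) r + u r p) r := by
    simpa only [one_smul] using (hasDerivAt_id' r).fun_smul hu_r.hasDerivAt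
  have hdN : r • deriv (fun s => u s p) r + u r p ∈ Nsp F p :=
    hd.mem_of_forall_mem (Submodule.isClosed_orthogonal _) fun s => Submodule.smul_mem _ _ (hu s)
  have hcovN (c : Pt) :
      PN F p (fderiv ℝ (fun q => r • u r q) p c) = r • covN F (u r) p c := by
    rw [fderiv_fun_const_smul hu_p, FunLike.coe_smul, Pi.smul_apply, PN_smul, covN]
  have ha0 : ‖fderiv ℝ F p (1, 0)‖ ≠ 0 := norm_ne_zero_iff.mpr h.fderiv_fst_ne_zero
  rw [Dcone, DconeE, hd.deriv, PN_of_mem hdN, hcovN, hcovN, DSigC_eq_covN_sub h (hu r)]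
  simp only [cross7_add_right, cross7_smul_right]
  match_scalars <;> field_simp
  norm_num

theorem Dcone_smul_eq (h : IsHolomorphicFrameAt F p) {ν : Pt → E7}
    (hν : DifferentiableAt ℝ ν p) (hνN : ν p ∈ Nsp F p) {f : ℝ → ℝ} {f' r : ℝ}
    (hr : r ≠ 0) (hf : HasDerivAt f f' r) :
    Dcone F (fun s q => f s • ν q) r p =
      (f r / r) • DSigC F ν p + (f' + 2 * f r / r) • cross7 (F p) (ν p) := by
  rw [Dcone_eq h hr (hf.differentiableAt.smul_const _) (hν.fun_const_smul _)
    (fun s => Submodule.smul_mem _ _ hνN), (hf.smul_const _).deriv, DSigC_const_smul hν]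
  simp only [cross7_smul_right]
  match_scalars <;> field_simp

end Cone

/-- Let C be an associative cone in ℝ⁷ with link Σ ⊂ S⁶ (parametrized by a holomorphic
conformal chart F), 𝐃_C the Fueter operator of the cone, and 𝐃_Σ the Dirac operator of the
link.  Then, for every section u of NC, every ν ∈ C^∞(N_{S⁶}Σ), every λ ∈ ℝ and j ∈ ℕ:
(a) 𝐃_C u = J ∂_r u + (1/r) 𝐃_Σ u + (2/r) J u;
(b) 𝐃_C (r^{λ−1} ν) = r^{λ−2} (𝐃_Σ ν + (λ+1) J ν);
(c) 𝐃_C (r^{λ−1} (log r)^j ν)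
      = r^{λ−2} (log r)^j (𝐃_Σ ν + (λ+1) J ν) + j r^{λ−2} (log r)^{j−1} J ν. -/
theorem statement7 (F : Pt → E7)
    (hF : ContDiff ℝ (⊤ : ℕ∞) F)
    (hunit : ∀ p, ‖F p‖ = 1)
    (hholo : ∀ p c, fderiv ℝ F p (j0 c) = cross7 (F p) (fderiv ℝ F p c))
    (himm : ∀ p, fderiv ℝ F p (1, 0) ≠ 0)
    (ν : Pt → E7) (hν : ContDiff ℝ (⊤ : ℕ∞) ν) (hνn : ∀ p, ν p ∈ Nsp F p)
    (l : ℝ) (j : ℕ) (r : ℝ) (hr : 0 < r) (p : Pt) :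
    (∀ u : ℝ → Pt → E7, (∀ q, Differentiable ℝ fun s => u s q) →
        (∀ s, Differentiable ℝ (u s)) → (∀ s q, u s q ∈ Nsp F q) →
        Dcone F u r p =
          cross7 (F p) (deriv (fun s => u s p) r) + r⁻¹ • DSigC F (u r) p +
            (2 / r) • cross7 (F p) (u r p)) ∧
      Dcone F (fun s q => s ^ (l - 1) • ν q) r p
          = r ^ (l - 2) • (DSigC F ν p + (l + 1) • cross7 (F p) (ν p)) ∧
      Dcone F (fun s q => (s ^ (l - 1) * Real.log s ^ j) • ν q) r p
          = (r ^ (l - 2) * Real.log r ^ j) • (DSigC F ν p + (l + 1) • cross7 (F p) (ν p))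
            + ((j : ℝ) * (r ^ (l - 2) * Real.log r ^ (j - 1))) • cross7 (F p) (ν p) := by
  have hframe : IsHolomorphicFrameAt F p :=
    .of_unit_of_holomorphic (hF.differentiable (by simp) p) hunit (hholo p) (himm p)
  have hlog (k : ℕ) :
      Dcone F (fun s q => (s ^ (l - 1) * Real.log s ^ k) • ν q) r p
        = (r ^ (l - 2) * Real.log r ^ k) • (DSigC F ν p + (l + 1) • cross7 (F p) (ν p))
          + ((k : ℝ) * (r ^ (l - 2) * Real.log r ^ (k - 1))) • cross7 (F p) (ν p) := by
    have hf := (Real.hasDerivAt_rpow_const (p := l - 1) (Or.inl hr.ne')).fun_mul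
      ((Real.hasDerivAt_log hr.ne').fun_pow k)
    rw [Dcone_smul_eq hframe (hν.differentiable (by simp) p) (hνn p) hr.ne' hf]
    have hpow : r ^ (l - 1 - 1) = r ^ (l - 2) := by ring_nf
    have hpow' : r ^ (l - 1) = r ^ (l - 2) * r := by
      rw [← hpow, Real.rpow_sub_one hr.ne' (l - 1), div_mul_cancel₀ _ hr.ne']
    rw [hpow, hpow']
    match_scalars <;> field_simp
    ring
  exact ⟨fun u hu_r hu_p hu => Dcone_eq hframe hr.ne' (hu_r p r) (hu_p r p) (hu · p),
    by simpa using hlog 0, hlog j⟩
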